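/- arXiv:math/0308259 — 5 statements merged into one kernel-verified Lean document; each statement's English description precedes it below -/
import Mathlib

section
/- Let G be a compact Hausdorff topological group with normalized Haar measure μ, let π be a continuous unitary representation of G on a complex Hilbert space H, and let ξ ∈ H with ‖ξ‖ = 1. Define T : H → H by Tη = ∫ ⟨η, π(x)ξ⟩ π(x)ξ dμ(x) (a Bochner integral). Then T is a bounded linear operator which is positive (⟨Tη, η⟩ ≥ 0 for all η), nonzero, compact, and satisfies T ∘ π(g) = π(g) ∘ T for every g ∈ G. -/
/-!
`T` is the average `∫ |π x ξ⟩⟨π x ξ| dμ(x)` of the rank-one projections onto the orbit of `ξ`,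
taken as a Bochner integral in `H →L[ℂ] H`. Positive operators form a closed cone and compact
operators a closed subspace, both containing every rank-one `|u⟩⟨u|`, so both contain `T`.
Left invariance of `μ` lets `π g` pass through the integral, and `⟪ξ, T ξ⟫ = ∫ |⟪π x ξ, ξ⟫|² dμ`
is positive because the integrand is continuous, nonnegative and equal to `1` at `x = 1`.
-/

open MeasureTheory InnerProductSpace

theorem Submodule.integral_mem {X E : Type*} [MeasurableSpace X] {μ : Measure X}
    [IsFiniteMeasure μ] [NormedAddCommGroup E] [NormedSpace ℝ E] [CompleteSpace E]
    (S : Submodule ℝ E) (hS : IsClosed (S : Set E)) {f : X → E}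
    (hf : ∀ᵐ x ∂μ, f x ∈ S) (hfi : Integrable f μ) : ∫ x, f x ∂μ ∈ S := by
  rcases eq_zero_or_neZero μ with rfl | _
  · simp
  · rw [← measure_smul_average]
    exact S.smul_mem _ (S.convex.average_mem hS hf hfi)

theorem InnerProductSpace.isCompactOperator_rankOne {𝕜 E F : Type*} [RCLike 𝕜]
    [NormedAddCommGroup E] [InnerProductSpace 𝕜 E] [NormedAddCommGroup F]
    [InnerProductSpace 𝕜 F] (x : E) (y : F) : IsCompactOperator (rankOne 𝕜 x y) :=
  (isCompactOperator_of_locallyCompactSpace_dom (innerSL 𝕜 y)).clm_comp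
    (ContinuousLinearMap.toSpanSingleton 𝕜 x)

theorem InnerProductSpace.inner_rankOne_self_apply {𝕜 E : Type*} [RCLike 𝕜]
    [NormedAddCommGroup E] [InnerProductSpace 𝕜 E] (x y : E) :
    inner 𝕜 y (rankOne 𝕜 x x y) = ((‖inner 𝕜 x y‖ ^ 2 : ℝ) : 𝕜) := by
  rw [rankOne_apply, inner_smul_right, ← inner_conj_symm y x, RCLike.mul_conj, RCLike.ofReal_pow]

theorem Continuous.rankOne {𝕜 E X : Type*} [RCLike 𝕜] [NormedAddCommGroup E]
    [InnerProductSpace 𝕜 E] [TopologicalSpace X] {u v : X → E} (hu : Continuous u)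
    (hv : Continuous v) : Continuous fun x => rankOne 𝕜 (u x) (v x) := by
  simp_rw [rankOne_def]
  fun_prop

section FrameOperator

variable {X H : Type*} [MeasurableSpace X] [NormedAddCommGroup H] [InnerProductSpace ℂ H]

noncomputable def frameOperator (μ : Measure X) (u : X → H) : H →L[ℂ] H :=
  ∫ x, rankOne ℂ (u x) (u x) ∂μ

variable {μ : Measure X} {u : X → H}

theorem frameOperator_apply (hu : Integrable (fun x => rankOne ℂ (u x) (u x)) μ) (η : H) :
    frameOperator μ u η = ∫ x, inner ℂ (u x) η • u x ∂μ :=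
  ContinuousLinearMap.integral_apply hu η

theorem inner_frameOperator_self [CompleteSpace H]
    (hu : Integrable (fun x => rankOne ℂ (u x) (u x)) μ) (η : H) :
    inner ℂ η (frameOperator μ u η) = ((∫ x, ‖inner ℂ (u x) η‖ ^ 2 ∂μ : ℝ) : ℂ) := by
  rw [frameOperator, ContinuousLinearMap.integral_apply hu,
    ← integral_inner (hu.apply_continuousLinearMap η), ← integral_complex_ofReal]
  exact integral_congr_ae (.of_forall fun x => inner_rankOne_self_apply (u x) η)

theorem isPositive_frameOperator [CompleteSpace H] (μ : Measure X) (u : X → H) :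
    (frameOperator μ u).IsPositive := by
  rw [← ContinuousLinearMap.nonneg_iff_isPositive]
  exact integral_nonneg fun x =>
    (ContinuousLinearMap.nonneg_iff_isPositive _).2 (isPositive_rankOne_self (u x))

theorem isCompactOperator_frameOperator [IsFiniteMeasure μ] [CompleteSpace H]
    (hu : Integrable (fun x => rankOne ℂ (u x) (u x)) μ) :
    IsCompactOperator (frameOperator μ u) :=
  ((compactOperator (RingHom.id ℂ) H H).restrictScalars ℝ).integral_mem
    isClosed_setOfPred_isCompactOperator (.of_forall fun _ => isCompactOperator_rankOne _ _) hu

theorem frameOperator_ne_zero [CompleteSpace H] [TopologicalSpace X] [OpensMeasurableSpace X]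
    [μ.IsOpenPosMeasure] (hcont : Continuous u)
    (hu : Integrable (fun x => rankOne ℂ (u x) (u x)) μ) {x₀ : X} (hx₀ : u x₀ ≠ 0) :
    frameOperator μ u ≠ 0 := by
  have hint : Integrable (fun x => ‖inner ℂ (u x) (u x₀)‖ ^ 2) μ := by
    refine ((hu.apply_continuousLinearMap (u x₀)).const_inner (𝕜 := ℂ) (u x₀)).re.congr
      (.of_forall fun x => ?_)
    simp only [inner_rankOne_self_apply, RCLike.ofReal_re]
  have hpos : 0 < ∫ x, ‖inner ℂ (u x) (u x₀)‖ ^ 2 ∂μ :=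
    integral_pos_of_integrable_nonneg_nonzero (by fun_prop) hint (x := x₀)
      (fun _ => by positivity) (by simpa using hx₀)
  intro h
  have h_inner := inner_frameOperator_self hu (u x₀)
  rw [h, zero_apply, inner_zero_right] at h_inner
  exact hpos.ne' (mod_cast h_inner.symm)

theorem frameOperator_apply_of_equivariant [CompleteSpace H] {G : Type*} [Group G]
    [MeasurableSpace G] [MeasurableMul G] {μ : Measure G} [μ.IsMulLeftInvariant]
    (π : G →* (H ≃ₗᵢ[ℂ] H)) {u : G → H} (hπu : ∀ g x, u (g * x) = π g (u x))
    (hu : Integrable (fun x => rankOne ℂ (u x) (u x)) μ) (g : G) (v : H) :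
    frameOperator μ u (π g v) = π g (frameOperator μ u v) := by
  rw [frameOperator_apply hu, frameOperator_apply hu, ← integral_mul_left_eq_self _ g]
  refine (integral_congr_ae (.of_forall fun x => ?_)).trans
    ((π g).toLinearIsometry.integral_comp_comm _)
  simp [hπu]

end FrameOperator

theorem stmt5_general {G : Type*} [Group G] [TopologicalSpace G] [IsTopologicalGroup G]
    [CompactSpace G] [MeasurableSpace G] [BorelSpace G]
    (μ : Measure G) [μ.IsHaarMeasure]
    {H : Type*} [NormedAddCommGroup H] [InnerProductSpace ℂ H] [CompleteSpace H]
    (π : G →* (H ≃ₗᵢ[ℂ] H)) (hπ : ∀ ξ : H, Continuous fun g => π g ξ)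
    (ξ : H) (hξ : ‖ξ‖ = 1) :
    ∃ T : H →L[ℂ] H,
      (∀ η : H, T η = ∫ x, (inner ℂ (π x ξ) η : ℂ) • (π x ξ) ∂μ) ∧
      T.IsPositive ∧ T ≠ 0 ∧ IsCompactOperator (⇑T) ∧
      ∀ g : G, ∀ v : H, T (π g v) = π g (T v) := by
  set u : G → H := fun x => π x ξ
  have hu : Integrable (fun x => rankOne ℂ (u x) (u x)) μ :=
    ((hπ ξ).rankOne (hπ ξ)).integrable_of_hasCompactSupport (.of_compactSpace _)
  refine ⟨frameOperator μ u, frameOperator_apply hu, isPositive_frameOperator μ u,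
    frameOperator_ne_zero (hπ ξ) hu (x₀ := 1) ?_, isCompactOperator_frameOperator hu,
    frameOperator_apply_of_equivariant π (fun g x => ?_) hu⟩
  · simp [u, ← norm_ne_zero_iff, hξ]
  · simp [u]

/-- Let `G` be a compact Hausdorff group with normalized Haar measure `μ`, `π` a
continuous unitary representation of `G` on a complex Hilbert space `H`, and
`ξ ∈ H` a unit vector.  Then the map `η ↦ ∫ ⟨η, π(x)ξ⟩ π(x)ξ dμ(x)` (inner
product linear in its first variable, i.e. `⟨η, ζ⟩ = inner ζ η` in Mathlib's
convention) is a bounded linear operator `T` on `H` which is positive, nonzero,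
compact, and commutes with every `π g`. -/
theorem stmt5 {G : Type*} [Group G] [TopologicalSpace G] [IsTopologicalGroup G]
    [CompactSpace G] [T2Space G] [MeasurableSpace G] [BorelSpace G]
    (μ : Measure G) [μ.IsHaarMeasure] [IsProbabilityMeasure μ]
    {H : Type*} [NormedAddCommGroup H] [InnerProductSpace ℂ H] [CompleteSpace H]
    (π : G →* (H ≃ₗᵢ[ℂ] H)) (hπ : ∀ ξ : H, Continuous fun g => π g ξ)
    (ξ : H) (hξ : ‖ξ‖ = 1) :
    ∃ T : H →L[ℂ] H,
      (∀ η : H, T η = ∫ x, (inner ℂ (π x ξ) η : ℂ) • (π x ξ) ∂μ) ∧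
      T.IsPositive ∧ T ≠ 0 ∧ IsCompactOperator (⇑T) ∧
      ∀ g : G, ∀ v : H, T (π g v) = π g (T v) :=
  stmt5_general μ π hπ ξ hξ
end

section
/- (Schur orthogonality, inequivalent case.) Let G be a compact Hausdorff topological group with normalized Haar measure μ, and let π and π′ be irreducible continuous unitary representations of G on finite-dimensional complex Hilbert spaces H and H′ that are not unitarily equivalent. Then for all ξ, η ∈ H and ξ′, η′ ∈ H′, ∫ ⟨π(x)ξ, η⟩ · conj(⟨π′(x)ξ′, η′⟩) dμ(x) = 0. -/
/-!
Averaging the rank-one operator `v ↦ ⟪ξ, v⟫ ξ'` over `G` against the invariant measure produces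
an operator `A : H → H'` with `A ∘ π(g) = π'(g) ∘ A`, and `⟪η', A η⟫` is the conjugate of the
integral in question. By Schur's lemma such an `A` is zero: otherwise `A` is onto (its range is
invariant) and `A*A` commutes with the irreducible `π`, hence is a scalar, necessarily `r²` with
`r > 0`, so `r⁻¹ A` would be a unitary equivalence between `π` and `π'`.
-/

open MeasureTheory
open scoped InnerProductSpace

section Schur

variable {G : Type*} [Group G]
  {H : Type*} [NormedAddCommGroup H] [InnerProductSpace ℂ H]
  {H' : Type*} [NormedAddCommGroup H'] [InnerProductSpace ℂ H']

def IsIrreducibleRep (π : G →* (H ≃ₗᵢ[ℂ] H)) : Prop :=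
  ∀ M : Submodule ℂ H, IsClosed (M : Set H) → (∀ g : G, ∀ m ∈ M, π g m ∈ M) → M = ⊥ ∨ M = ⊤

def Intertwines (π : G →* (H ≃ₗᵢ[ℂ] H)) (π' : G →* (H' ≃ₗᵢ[ℂ] H')) (A : H →ₗ[ℂ] H') : Prop :=
  ∀ g v, A (π g v) = π' g (A v)

variable {π : G →* (H ≃ₗᵢ[ℂ] H)} {π' : G →* (H' ≃ₗᵢ[ℂ] H')}

theorem inner_rep_eq_flip (g : G) (v w : H) : ⟪π g v, w⟫_ℂ = ⟪v, π g⁻¹ w⟫_ℂ := by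
  rw [(π g).inner_map_eq_flip, map_inv, LinearIsometryEquiv.inv_def]

theorem Intertwines.comp {H'' : Type*} [NormedAddCommGroup H''] [InnerProductSpace ℂ H'']
    {π'' : G →* (H'' ≃ₗᵢ[ℂ] H'')} {A : H →ₗ[ℂ] H'} {B : H' →ₗ[ℂ] H''}
    (hB : Intertwines π' π'' B) (hA : Intertwines π π' A) : Intertwines π π'' (B ∘ₗ A) :=
  fun g v => by rw [LinearMap.comp_apply, hA, hB, LinearMap.comp_apply]

theorem Intertwines.adjoint [FiniteDimensional ℂ H] [FiniteDimensional ℂ H'] {A : H →ₗ[ℂ] H'}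
    (hA : Intertwines π π' A) : Intertwines π' π (LinearMap.adjoint A) := fun g w =>
  ext_inner_right ℂ fun u => by
    rw [LinearMap.adjoint_inner_left, inner_rep_eq_flip, ← hA, inner_rep_eq_flip,
      LinearMap.adjoint_inner_left]

theorem IsIrreducibleRep.surjective_of_intertwines [FiniteDimensional ℂ H]
    (hπ' : IsIrreducibleRep π') {A : H →ₗ[ℂ] H'} (hA : Intertwines π π' A) (hA0 : A ≠ 0) :
    Function.Surjective A := by
  refine LinearMap.range_eq_top.mp
    ((hπ' _ (Submodule.closed_of_finiteDimensional _) ?_).resolve_left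
      fun h => hA0 (LinearMap.range_eq_bot.mp h))
  rintro g _ ⟨v, rfl⟩
  exact ⟨π g v, hA g v⟩

theorem IsIrreducibleRep.exists_eq_smul_id [FiniteDimensional ℂ H] [Nontrivial H]
    (hπ : IsIrreducibleRep π) {B : H →ₗ[ℂ] H} (hB : Intertwines π π B) :
    ∃ c : ℂ, B = c • LinearMap.id := by
  obtain ⟨c, hc⟩ := Module.End.exists_eigenvalue B
  have htop : Module.End.eigenspace B c = ⊤ := by
    refine (hπ _ (Submodule.closed_of_finiteDimensional _) ?_).resolve_left hc
    intro g m hm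
    rw [Module.End.mem_eigenspace_iff] at hm ⊢
    rw [hB, hm, map_smul]
  exact ⟨c, LinearMap.ext fun v => Module.End.mem_eigenspace_iff.mp (htop ▸ Submodule.mem_top)⟩

theorem exists_linearIsometryEquiv_eq_smul {A : H →ₗ[ℂ] H'} (hA : Function.Surjective A)
    (hA0 : A ≠ 0) {c : ℂ} (hc : ∀ v w, ⟪A v, A w⟫_ℂ = c * ⟪v, w⟫_ℂ) :
    ∃ (a : ℂ) (U : H ≃ₗᵢ[ℂ] H'), ∀ v, U v = a • A v := by
  obtain ⟨u, hu⟩ := DFunLike.ne_iff.mp hA0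
  rw [LinearMap.zero_apply] at hu
  have hu0 : u ≠ 0 := by
    rintro rfl
    exact hu (map_zero A)
  set r : ℝ := ‖A u‖ / ‖u‖
  have hr : (r : ℂ) ≠ 0 := by
    exact_mod_cast (div_pos (norm_pos_iff.mpr hu) (norm_pos_iff.mpr hu0)).ne'
  have hcr : c = (r : ℂ) ^ 2 := by
    have h := hc u u
    rw [inner_self_eq_norm_sq_to_K, inner_self_eq_norm_sq_to_K] at h
    have : (‖u‖ : ℂ) ≠ 0 := by exact_mod_cast (norm_pos_iff.mpr hu0).ne'
    simp only [r, Complex.ofReal_div]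
    field_simp
    exact h.symm
  set L : H →ₗ[ℂ] H' := (r : ℂ)⁻¹ • A
  have hL : ∀ v w, ⟪L v, L w⟫_ℂ = ⟪v, w⟫_ℂ := by
    intro v w
    simp only [L, LinearMap.smul_apply, inner_smul_left, inner_smul_right, hc, hcr, map_inv₀,
      Complex.conj_ofReal]
    field_simp
  have hLsurj : Function.Surjective L := fun w => by
    obtain ⟨v, rfl⟩ := hA w
    refine ⟨(r : ℂ) • v, ?_⟩
    rw [LinearMap.smul_apply, map_smul, smul_smul, inv_mul_cancel₀ hr, one_smul]
  exact ⟨_, .ofSurjective (L.isometryOfInner hL) hLsurj, fun v => rfl⟩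

theorem IsIrreducibleRep.exists_unitary_intertwiner [FiniteDimensional ℂ H]
    [FiniteDimensional ℂ H'] (hπ : IsIrreducibleRep π) (hπ' : IsIrreducibleRep π') {A : H →ₗ[ℂ] H'}
    (hA : Intertwines π π' A) (hA0 : A ≠ 0) :
    ∃ U : H ≃ₗᵢ[ℂ] H', ∀ g v, U (π g v) = π' g (U v) := by
  have : Nontrivial H := not_subsingleton_iff_nontrivial.mp fun _ => hA0 (Subsingleton.elim _ _)
  obtain ⟨c, hc⟩ := hπ.exists_eq_smul_id (hA.adjoint.comp hA)
  have hinner : ∀ v w, ⟪A v, A w⟫_ℂ = c * ⟪v, w⟫_ℂ := fun v w => by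
    rw [← LinearMap.adjoint_inner_right, ← LinearMap.comp_apply, hc, LinearMap.smul_apply,
      LinearMap.id_apply, inner_smul_right]
  obtain ⟨a, U, hU⟩ :=
    exists_linearIsometryEquiv_eq_smul (hπ'.surjective_of_intertwines hA hA0) hA0 hinner
  exact ⟨U, fun g v => by rw [hU, hU, hA, map_smul]⟩

end Schur

section Averaging

variable {G : Type*} [Group G] [TopologicalSpace G] [CompactSpace G]
  [MeasurableSpace G] [BorelSpace G] (μ : Measure G) [IsFiniteMeasureOnCompacts μ]
  {H : Type*} [NormedAddCommGroup H] [InnerProductSpace ℂ H]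
  {H' : Type*} [NormedAddCommGroup H'] [InnerProductSpace ℂ H']
  (π : G →* (H ≃ₗᵢ[ℂ] H)) (π' : G →* (H' ≃ₗᵢ[ℂ] H'))

theorem integrable_inner_smul_rep (hπ : ∀ ξ : H, Continuous fun g => π g ξ)
    (hπ' : ∀ ξ : H', Continuous fun g => π' g ξ) (ξ v : H) (ξ' : H') :
    Integrable (fun x => ⟪π x ξ, v⟫_ℂ • π' x ξ') μ :=
  (((hπ ξ).inner continuous_const).smul (hπ' ξ')).integrable_of_hasCompactSupport
    (HasCompactSupport.of_compactSpace _)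

variable (hπ : ∀ ξ : H, Continuous fun g => π g ξ)
  (hπ' : ∀ ξ : H', Continuous fun g => π' g ξ)

/-- The average of `π'(x) ∘ (ξ' ⊗ ξ*) ∘ π(x)⁻¹` over `G`, using `⟪ξ, π(x)⁻¹ v⟫ = ⟪π(x) ξ, v⟫`. -/
noncomputable def averagedRankOne (ξ : H) (ξ' : H') : H →ₗ[ℂ] H' where
  toFun v := ∫ x, ⟪π x ξ, v⟫_ℂ • π' x ξ' ∂μ
  map_add' v w := by
    simp only [inner_add_right, add_smul]
    exact integral_add (integrable_inner_smul_rep μ π π' hπ hπ' ξ v ξ')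
      (integrable_inner_smul_rep μ π π' hπ hπ' ξ w ξ')
  map_smul' c v := by
    simp only [inner_smul_right, RingHom.id_apply, ← smul_smul]
    exact integral_smul c _

theorem averagedRankOne_apply (ξ v : H) (ξ' : H') :
    averagedRankOne μ π π' hπ hπ' ξ ξ' v = ∫ x, ⟪π x ξ, v⟫_ℂ • π' x ξ' ∂μ :=
  rfl

theorem intertwines_averagedRankOne [IsTopologicalGroup G] [μ.IsMulLeftInvariant]
    [CompleteSpace H'] (ξ : H) (ξ' : H') :
    Intertwines π π' (averagedRankOne μ π π' hπ hπ' ξ ξ') := fun g v =>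
  calc ∫ x, ⟪π x ξ, π g v⟫_ℂ • π' x ξ' ∂μ
      = ∫ x, π' g (⟪π x ξ, v⟫_ℂ • π' x ξ') ∂μ := by
        rw [← integral_mul_left_eq_self _ g]
        congr 1 with x
        simp only [map_mul, LinearIsometryEquiv.coe_mul, Function.comp_apply,
          LinearIsometryEquiv.inner_map_map, map_smul]
    _ = π' g (∫ x, ⟪π x ξ, v⟫_ℂ • π' x ξ' ∂μ) := (π' g).toLinearIsometry.integral_comp_comm _

theorem inner_averagedRankOne [CompleteSpace H'] (ξ η : H) (ξ' η' : H') :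
    ⟪η', averagedRankOne μ π π' hπ hπ' ξ ξ' η⟫_ℂ = ∫ x, ⟪π x ξ, η⟫_ℂ * ⟪η', π' x ξ'⟫_ℂ ∂μ := by
  rw [averagedRankOne_apply, ← integral_inner (integrable_inner_smul_rep μ π π' hπ hπ' ξ η ξ')]
  simp only [inner_smul_right]

end Averaging

theorem stmt10_general {G : Type*} [Group G] [TopologicalSpace G] [IsTopologicalGroup G]
    [CompactSpace G] [MeasurableSpace G] [BorelSpace G]
    (μ : Measure G) [μ.IsHaarMeasure]
    {H : Type*} [NormedAddCommGroup H] [InnerProductSpace ℂ H]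
    [FiniteDimensional ℂ H]
    {H' : Type*} [NormedAddCommGroup H'] [InnerProductSpace ℂ H']
    [FiniteDimensional ℂ H']
    (π : G →* (H ≃ₗᵢ[ℂ] H)) (hπ : ∀ ξ : H, Continuous fun g => π g ξ)
    (π' : G →* (H' ≃ₗᵢ[ℂ] H')) (hπ' : ∀ ξ : H', Continuous fun g => π' g ξ)
    (hirr : ∀ M : Submodule ℂ H, IsClosed (M : Set H) →
      (∀ g : G, ∀ m ∈ M, π g m ∈ M) → M = ⊥ ∨ M = ⊤)
    (hirr' : ∀ M : Submodule ℂ H', IsClosed (M : Set H') →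
      (∀ g : G, ∀ m ∈ M, π' g m ∈ M) → M = ⊥ ∨ M = ⊤)
    (hneq : ¬ ∃ U : H ≃ₗᵢ[ℂ] H', ∀ g : G, ∀ v : H, U (π g v) = π' g (U v)) :
    ∀ (ξ η : H) (ξ' η' : H'),
      ∫ x, (inner ℂ η (π x ξ) : ℂ) * (starRingEnd ℂ) (inner ℂ η' (π' x ξ')) ∂μ = 0 := by
  intro ξ η ξ' η'
  have hA0 : averagedRankOne μ π π' hπ hπ' ξ ξ' = 0 := by
    by_contra hA0
    exact hneq (IsIrreducibleRep.exists_unitary_intertwiner hirr hirr'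
      (intertwines_averagedRankOne μ π π' hπ hπ' ξ ξ') hA0)
  calc ∫ x, ⟪η, π x ξ⟫_ℂ * (starRingEnd ℂ) ⟪η', π' x ξ'⟫_ℂ ∂μ
      = ∫ x, (starRingEnd ℂ) (⟪π x ξ, η⟫_ℂ * ⟪η', π' x ξ'⟫_ℂ) ∂μ := by
        simp only [map_mul, inner_conj_symm]
    _ = 0 := by
        rw [integral_conj, ← inner_averagedRankOne μ π π' hπ hπ', hA0, LinearMap.zero_apply,
          inner_zero_right, map_zero]

/-- Schur orthogonality, inequivalent case: matrix coefficients of inequivalent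
irreducible continuous unitary finite-dimensional representations of a compact
Hausdorff group are orthogonal in `L²(G,μ)`.  Here `⟨π(x)ξ, η⟩` (linear in the
first variable) is `inner η (π x ξ)` in Mathlib's convention. -/
theorem stmt10 {G : Type*} [Group G] [TopologicalSpace G] [IsTopologicalGroup G]
    [CompactSpace G] [T2Space G] [MeasurableSpace G] [BorelSpace G]
    (μ : Measure G) [μ.IsHaarMeasure] [IsProbabilityMeasure μ]
    {H : Type*} [NormedAddCommGroup H] [InnerProductSpace ℂ H]
    [FiniteDimensional ℂ H] [Nontrivial H]
    {H' : Type*} [NormedAddCommGroup H'] [InnerProductSpace ℂ H']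
    [FiniteDimensional ℂ H'] [Nontrivial H']
    (π : G →* (H ≃ₗᵢ[ℂ] H)) (hπ : ∀ ξ : H, Continuous fun g => π g ξ)
    (π' : G →* (H' ≃ₗᵢ[ℂ] H')) (hπ' : ∀ ξ : H', Continuous fun g => π' g ξ)
    (hirr : ∀ M : Submodule ℂ H, IsClosed (M : Set H) →
      (∀ g : G, ∀ m ∈ M, π g m ∈ M) → M = ⊥ ∨ M = ⊤)
    (hirr' : ∀ M : Submodule ℂ H', IsClosed (M : Set H') →
      (∀ g : G, ∀ m ∈ M, π' g m ∈ M) → M = ⊥ ∨ M = ⊤)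
    (hneq : ¬ ∃ U : H ≃ₗᵢ[ℂ] H', ∀ g : G, ∀ v : H, U (π g v) = π' g (U v)) :
    ∀ (ξ η : H) (ξ' η' : H'),
      ∫ x, (inner ℂ η (π x ξ) : ℂ) * (starRingEnd ℂ) (inner ℂ η' (π' x ξ')) ∂μ = 0 :=
  stmt10_general μ π hπ π' hπ' hirr hirr' hneq
end

section
/- (Schur orthogonality relations.) Let G be a compact Hausdorff topological group with normalized Haar measure μ, let π be an irreducible continuous unitary representation of G on a finite-dimensional complex Hilbert space H of dimension d, and let (e₁,…,e_d) be an orthonormal basis of H. Writing π_{ij}(x) = ⟨π(x)e_j, e_i⟩, one has ∫ π_{ij}(x) · conj(π_{kl}(x)) dμ(x) = δ_{ik} δ_{jl} / d for all 1 ≤ i,j,k,l ≤ d; in particular the functions √d · π_{ij} form an orthonormal family in L²(G,μ). -/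
/-!
Averaging `π x ∘ A ∘ π x⁻¹` over the Haar measure produces an operator commuting with `π`,
hence a scalar `c` by Schur's lemma; since every conjugate of `A` has the trace of `A`, so does
the average, which gives `c = tr A / dim H`. For the rank-one operator `A = |x⟩⟨y|` the matrix
coefficient `⟪u, avg(A) v⟫` is exactly `∫ ⟪u, π g x⟫ ⟪π g y, v⟫ dμ`.
-/

open MeasureTheory

theorem Module.End.exists_eq_algebraMap_of_forall_commute {K V ι : Type*} [Field K] [IsAlgClosed K]
    [AddCommGroup V] [Module K V] [FiniteDimensional K V] [Nontrivial V] (ρ : ι → Module.End K V)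
    (hρ : ∀ M : Submodule K V, (∀ i, ∀ m ∈ M, ρ i m ∈ M) → M = ⊥ ∨ M = ⊤)
    {T : Module.End K V} (hT : ∀ i, Commute T (ρ i)) : ∃ c : K, T = algebraMap K _ c := by
  obtain ⟨c, hc⟩ := T.exists_eigenvalue
  refine ⟨c, ?_⟩
  have hinv : ∀ i, ∀ m ∈ T.eigenspace c, ρ i m ∈ T.eigenspace c := by
    intro i m hm
    rw [Module.End.mem_eigenspace_iff] at hm ⊢
    rw [← Module.End.mul_apply, (hT i).eq, Module.End.mul_apply, hm, map_smul]
  rcases hρ _ hinv with hbot | htop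
  · exact absurd hbot hc
  · ext v
    have : v ∈ T.eigenspace c := htop ▸ Submodule.mem_top
    simpa using Module.End.mem_eigenspace_iff.mp this

noncomputable def conjAverage {G E : Type*} [Group G] [MeasurableSpace G] [NormedAddCommGroup E]
    [NormedSpace ℂ E] (μ : Measure G) (π : G →* (E ≃ₗᵢ[ℂ] E)) (A : E →L[ℂ] E) : E →L[ℂ] E :=
  ∫ x, (π x : E →L[ℂ] E) ∘L A ∘L (π x⁻¹ : E →L[ℂ] E) ∂μ

section ConjAverage

variable {G : Type*} [Group G] [TopologicalSpace G] [IsTopologicalGroup G]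
  {E : Type*} [NormedAddCommGroup E] [NormedSpace ℂ E] [FiniteDimensional ℂ E]
  {π : G →* (E ≃ₗᵢ[ℂ] E)} (hπ : ∀ v : E, Continuous fun g => π g v)
include hπ

theorem continuous_conj_clm (A : E →L[ℂ] E) :
    Continuous fun x => (π x : E →L[ℂ] E) ∘L A ∘L (π x⁻¹ : E →L[ℂ] E) := by
  have h : Continuous fun x => (π x : E →L[ℂ] E) := continuous_clm_apply.2 hπ
  exact h.clm_comp (continuous_const.clm_comp (h.comp continuous_inv))

variable [MeasurableSpace G] [BorelSpace G] [CompactSpace G] (μ : Measure G)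

theorem integrable_conj_clm [IsFiniteMeasure μ] (A : E →L[ℂ] E) :
    Integrable (fun x => (π x : E →L[ℂ] E) ∘L A ∘L (π x⁻¹ : E →L[ℂ] E)) μ :=
  (continuous_conj_clm hπ A).integrable_of_hasCompactSupport (.of_compactSpace _)

theorem conjAverage_apply [IsFiniteMeasure μ] (A : E →L[ℂ] E) (v : E) :
    conjAverage μ π A v = ∫ x, π x (A (π x⁻¹ v)) ∂μ :=
  ContinuousLinearMap.integral_apply (integrable_conj_clm hπ μ A) v

theorem map_conjAverage_apply [IsFiniteMeasure μ] [μ.IsMulLeftInvariant] (A : E →L[ℂ] E)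
    (g : G) (v : E) :
    π g (conjAverage μ π A v) = conjAverage μ π A (π g v) := by
  rw [conjAverage_apply hπ μ, conjAverage_apply hπ μ]
  conv_rhs => rw [← integral_mul_left_eq_self _ g]
  refine ((π g).toLinearIsometry.integral_comp_comm _).symm.trans ?_
  congr 1 with x
  simp [mul_inv_rev]

theorem trace_conjAverage [IsProbabilityMeasure μ] (A : E →L[ℂ] E) :
    LinearMap.trace ℂ E (conjAverage μ π A) = LinearMap.trace ℂ E A := by
  let tr : (E →L[ℂ] E) →L[ℂ] ℂ :=
    (LinearMap.trace ℂ E ∘ₗ ContinuousLinearMap.coeLM ℂ).toContinuousLinearMap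
  have htr (B : E →L[ℂ] E) : tr B = LinearMap.trace ℂ E B := rfl
  rw [← htr, conjAverage, ← tr.integral_comp_comm (integrable_conj_clm hπ μ A)]
  have hconj (x : G) : tr ((π x : E →L[ℂ] E) ∘L A ∘L (π x⁻¹ : E →L[ℂ] E)) = tr A := by
    rw [htr, htr, ← LinearMap.trace_conj' (A : E →ₗ[ℂ] E) (π x).toLinearEquiv]
    congr 1
    ext v
    simp [LinearEquiv.conj_apply, map_inv, LinearIsometryEquiv.inv_def]
  simp only [hconj, integral_const, probReal_univ, one_smul]
  exact htr A

end ConjAverage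

section SchurOrthogonality

open InnerProductSpace

variable {G : Type*} [Group G] [TopologicalSpace G] [IsTopologicalGroup G]
  [MeasurableSpace G] [BorelSpace G] [CompactSpace G] (μ : Measure G)
  {H : Type*} [NormedAddCommGroup H] [InnerProductSpace ℂ H] [FiniteDimensional ℂ H]
  {π : G →* (H ≃ₗᵢ[ℂ] H)} (hπ : ∀ v : H, Continuous fun g => π g v)
include hπ

theorem inner_conjAverage_rankOne [IsFiniteMeasure μ] (u v x y : H) :
    inner ℂ u (conjAverage μ π (rankOne ℂ x y) v) =
      ∫ g, inner ℂ u (π g x) * inner ℂ (π g y) v ∂μ := by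
  have h := integrable_conj_clm hπ μ (rankOne ℂ x y)
  rw [conjAverage, ContinuousLinearMap.integral_apply h,
    ← integral_inner (h.apply_continuousLinearMap v)]
  congr 1 with g
  simp only [ContinuousLinearMap.comp_apply, ContinuousLinearEquiv.coe_coe,
    LinearIsometryEquiv.coe_toContinuousLinearEquiv]
  rw [rankOne_apply, map_smul, inner_smul_right, mul_comm, ← (π g).inner_map_map y]
  simp

theorem integral_inner_mul_inner [Nontrivial H] [μ.IsMulLeftInvariant] [IsProbabilityMeasure μ]
    (hirr : ∀ M : Submodule ℂ H, IsClosed (M : Set H) →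
      (∀ g : G, ∀ m ∈ M, π g m ∈ M) → M = ⊥ ∨ M = ⊤) (u v x y : H) :
    ∫ g, inner ℂ u (π g x) * inner ℂ (π g y) v ∂μ =
      inner ℂ u v * inner ℂ y x / Module.finrank ℂ H := by
  obtain ⟨c, hc⟩ := Module.End.exists_eq_algebraMap_of_forall_commute
    (fun g => ((π g : H →L[ℂ] H) : Module.End ℂ H))
    (fun M hM => hirr M M.closed_of_finiteDimensional hM)
    (T := conjAverage μ π (rankOne ℂ x y)) fun g => by
      ext w
      exact (map_conjAverage_apply hπ μ _ g w).symm
  have htrace : c * Module.finrank ℂ H = inner ℂ y x := by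
    rw [← trace_rankOne, ← trace_conjAverage hπ μ, hc,
      Algebra.algebraMap_eq_smul_one, map_smul, LinearMap.trace_one, smul_eq_mul]
  have hn : (Module.finrank ℂ H : ℂ) ≠ 0 := by exact_mod_cast Module.finrank_pos.ne'
  rw [← inner_conjAverage_rankOne μ hπ, show conjAverage μ π (rankOne ℂ x y) v = c • v from
    LinearMap.congr_fun hc v, inner_smul_right, ← htrace]
  field_simp

end SchurOrthogonality

theorem stmt11_general {G : Type*} [Group G] [TopologicalSpace G] [IsTopologicalGroup G]
    [CompactSpace G] [MeasurableSpace G] [BorelSpace G]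
    (μ : Measure G) [μ.IsHaarMeasure] [IsProbabilityMeasure μ]
    {H : Type*} [NormedAddCommGroup H] [InnerProductSpace ℂ H]
    [FiniteDimensional ℂ H] [Nontrivial H]
    (π : G →* (H ≃ₗᵢ[ℂ] H)) (hπ : ∀ ξ : H, Continuous fun g => π g ξ)
    (hirr : ∀ M : Submodule ℂ H, IsClosed (M : Set H) →
      (∀ g : G, ∀ m ∈ M, π g m ∈ M) → M = ⊥ ∨ M = ⊤)
    (d : ℕ) (hd : Module.finrank ℂ H = d) (e : OrthonormalBasis (Fin d) ℂ H) :
    ∀ i j k l : Fin d,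
      ∫ x, (inner ℂ (e i) (π x (e j)) : ℂ) *
          (starRingEnd ℂ) (inner ℂ (e k) (π x (e l))) ∂μ
        = (if i = k then 1 else 0) * (if j = l then 1 else 0) / (d : ℂ) := by
  intro i j k l
  have horth := orthonormal_iff_ite.mp e.orthonormal
  simp_rw [inner_conj_symm]
  rw [integral_inner_mul_inner μ hπ hirr, horth, horth, hd]
  simp only [eq_comm (a := l)]

/-- Schur orthogonality relations: for an irreducible continuous unitary
representation `π` of a compact Hausdorff group on a `d`-dimensional complex
Hilbert space with orthonormal basis `e`, writing
`π_{ij}(x) = ⟨π(x)e_j, e_i⟩ = inner (e i) (π x (e j))` (inner product linear in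
the first variable), one has `∫ π_{ij} conj(π_{kl}) dμ = δ_{ik} δ_{jl} / d`;
in particular the `√d · π_{ij}` form an orthonormal family in `L²(G,μ)`. -/
theorem stmt11 {G : Type*} [Group G] [TopologicalSpace G] [IsTopologicalGroup G]
    [CompactSpace G] [T2Space G] [MeasurableSpace G] [BorelSpace G]
    (μ : Measure G) [μ.IsHaarMeasure] [IsProbabilityMeasure μ]
    {H : Type*} [NormedAddCommGroup H] [InnerProductSpace ℂ H]
    [FiniteDimensional ℂ H] [Nontrivial H]
    (π : G →* (H ≃ₗᵢ[ℂ] H)) (hπ : ∀ ξ : H, Continuous fun g => π g ξ)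
    (hirr : ∀ M : Submodule ℂ H, IsClosed (M : Set H) →
      (∀ g : G, ∀ m ∈ M, π g m ∈ M) → M = ⊥ ∨ M = ⊤)
    (d : ℕ) (hd : Module.finrank ℂ H = d) (e : OrthonormalBasis (Fin d) ℂ H) :
    ∀ i j k l : Fin d,
      ∫ x, (inner ℂ (e i) (π x (e j)) : ℂ) *
          (starRingEnd ℂ) (inner ℂ (e k) (π x (e l))) ∂μ
        = (if i = k then 1 else 0) * (if j = l then 1 else 0) / (d : ℂ) :=
  stmt11_general μ π hπ hirr d hd e
end

section
/- Let G be a compact Hausdorff topological group with normalized Haar measure μ, let π be an irreducible continuous unitary representation of G on a finite-dimensional complex Hilbert space H of dimension d, and let η ∈ H be nonzero. Define U : H → C(G;ℂ) by (Uξ)(y) = ⟨π(y)ξ, η⟩. Then U is linear and injective, U(π(x)ξ) = R_x(Uξ) for all x ∈ G and ξ ∈ H (where (R_xφ)(y) = φ(yx)), and ∫ |(Uξ)(y)|² dμ(y) = ‖ξ‖²‖η‖²/d for all ξ ∈ H; hence (√d/‖η‖)·U is a linear isometry of H into L²(G,μ) intertwining π with the right regular representation. -/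
/-!
Average the rank-one operator `|η⟩⟨η|` over the orbit of `η`: `A = ∫ |π(y)⁻¹η⟩⟨π(y)⁻¹η| dμ(y)`.
Right invariance of `μ` makes `A` commute with every `π(g)`, so by Schur's lemma `A = c • 1`,
and `⟪ξ, A ξ⟫ = ∫ |⟪η, π(y)ξ⟫|² dμ(y)` becomes `c ‖ξ‖²`. Summing over an orthonormal basis,
Parseval gives `c · d = ‖η‖²`. Injectivity holds because the common kernel of the
coefficients `ξ ↦ ⟪η, π(y)ξ⟫` is an invariant subspace not containing `η`.
-/

open MeasureTheory InnerProductSpace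

theorem Module.End.exists_eq_smul_one_of_forall_commute {K V ι : Type*} [Field K]
    [IsAlgClosed K] [AddCommGroup V] [Module K V] [FiniteDimensional K V] [Nontrivial V]
    {ρ : ι → Module.End K V}
    (hρ : ∀ M : Submodule K V, (∀ i, ∀ m ∈ M, ρ i m ∈ M) → M = ⊥ ∨ M = ⊤)
    {A : Module.End K V} (hA : ∀ i, Commute A (ρ i)) : ∃ c : K, A = c • 1 := by
  obtain ⟨c, hc⟩ := A.exists_eigenvalue
  have hinv : ∀ i, ∀ m ∈ A.eigenspace c, ρ i m ∈ A.eigenspace c := fun i m hm => by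
    rw [Module.End.mem_eigenspace_iff] at hm ⊢
    rw [← Module.End.mul_apply, (hA i).eq, Module.End.mul_apply, hm, map_smul]
  have htop := (hρ _ hinv).resolve_left hc
  refine ⟨c, LinearMap.ext fun v => ?_⟩
  exact Module.End.mem_eigenspace_iff.mp (htop ▸ Submodule.mem_top)

theorem MeasureTheory.Measure.isMulRightInvariant_of_isProbabilityMeasure {G : Type*} [Group G]
    [TopologicalSpace G] [IsTopologicalGroup G] [LocallyCompactSpace G] [MeasurableSpace G]
    [BorelSpace G] (μ : Measure G) [μ.IsHaarMeasure] [IsProbabilityMeasure μ] :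
    μ.IsMulRightInvariant where
  map_mul_right_eq_self g :=
    have : IsProbabilityMeasure (μ.map (· * g)) :=
      isProbabilityMeasure_map (measurable_mul_const g).aemeasurable
    isHaarMeasure_eq_of_isProbabilityMeasure _ μ

section UnitaryRepresentation

variable {G : Type*} [Group G] {H : Type*} [NormedAddCommGroup H] [InnerProductSpace ℂ H]
  {π : G →* (H ≃ₗᵢ[ℂ] H)}

theorem map_mul_apply (x y : G) (ξ : H) : π (x * y) ξ = π x (π y ξ) := by
  rw [map_mul, LinearIsometryEquiv.coe_mul, Function.comp_apply]

theorem inner_map_inv_left (y : G) (η ξ : H) : inner ℂ (π y⁻¹ η) ξ = inner ℂ η (π y ξ) := by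
  rw [← (π y).inner_map_map, map_inv, LinearIsometryEquiv.coe_inv,
    LinearIsometryEquiv.apply_symm_apply]

theorem eq_zero_of_forall_inner_map_eq_zero
    (hπ : ∀ M : Submodule ℂ H, (∀ g, ∀ m ∈ M, π g m ∈ M) → M = ⊥ ∨ M = ⊤)
    {η ξ : H} (hη : η ≠ 0) (h : ∀ y, inner ℂ η (π y ξ) = 0) : ξ = 0 := by
  let M : Submodule ℂ H := ⨅ y, LinearMap.ker (innerₛₗ ℂ η ∘ₗ (π y).toLinearMap)
  have hM : ∀ ζ, ζ ∈ M ↔ ∀ y, inner ℂ η (π y ζ) = 0 := by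
    simp [M, Submodule.mem_iInf]
  have hinv : ∀ g, ∀ m ∈ M, π g m ∈ M := fun g m hm =>
    (hM _).2 fun y => by rw [← map_mul_apply]; exact (hM m).1 hm (y * g)
  rcases hπ M hinv with hbot | htop
  · exact (Submodule.eq_bot_iff M).1 hbot ξ ((hM ξ).2 h)
  · have hη0 := (hM η).1 (htop ▸ Submodule.mem_top) 1
    simp only [map_one, LinearIsometryEquiv.coe_one, id_eq, inner_self_eq_zero] at hη0
    exact absurd hη0 hη

end UnitaryRepresentation

theorem Continuous.integrable_of_compactSpace {X E : Type*} [TopologicalSpace X] [CompactSpace X]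
    [MeasurableSpace X] [OpensMeasurableSpace X] [NormedAddCommGroup E] {μ : Measure X}
    [IsFiniteMeasure μ] {f : X → E} (hf : Continuous f) : Integrable f μ :=
  hf.integrable_of_hasCompactSupport (.of_compactSpace f)

section OrbitFrameOperator

variable {G : Type*} [Group G] [MeasurableSpace G] {H : Type*} [NormedAddCommGroup H]
  [InnerProductSpace ℂ H]

noncomputable def orbitFrameOperator (π : G →* (H ≃ₗᵢ[ℂ] H)) (μ : Measure G) (η : H) :
    H →L[ℂ] H :=
  ∫ y, rankOne ℂ (π y⁻¹ η) (π y⁻¹ η) ∂μ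

variable [TopologicalSpace G] [CompactSpace G] [OpensMeasurableSpace G]
  {π : G →* (H ≃ₗᵢ[ℂ] H)} (μ : Measure G) (η : H)

theorem sum_integral_norm_inner_map_sq {ι : Type*} [Fintype ι] [IsProbabilityMeasure μ]
    (hπ : ∀ ξ : H, Continuous fun g => π g ξ) (b : OrthonormalBasis ι ℂ H) :
    ∑ i, ∫ y, ‖inner ℂ η (π y (b i))‖ ^ 2 ∂μ = ‖η‖ ^ 2 := by
  have hcont (i : ι) : Continuous fun y => ‖inner ℂ η (π y (b i))‖ ^ 2 :=
    (continuous_const.inner (hπ (b i))).norm.pow 2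
  rw [← integral_finsetSum _ fun i _ => (hcont i).integrable_of_compactSpace]
  simp_rw [← inner_map_inv_left, b.sum_sq_norm_inner_left, LinearIsometryEquiv.norm_map]
  simp

variable [ContinuousInv G]

theorem integrable_rankOne_orbit [IsFiniteMeasure μ] [FiniteDimensional ℂ H]
    (hπ : ∀ ξ : H, Continuous fun g => π g ξ) :
    Integrable (fun y => rankOne ℂ (π y⁻¹ η) (π y⁻¹ η)) μ := by
  have horbit : Continuous fun y : G => π y⁻¹ η := (hπ η).comp continuous_inv
  exact (continuous_clm_apply.2 fun ζ => (horbit.inner continuous_const).smul horbit)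
    |>.integrable_of_compactSpace

theorem orbitFrameOperator_apply [IsFiniteMeasure μ] [FiniteDimensional ℂ H]
    (hπ : ∀ ξ : H, Continuous fun g => π g ξ) (ζ : H) :
    orbitFrameOperator π μ η ζ = ∫ y, inner ℂ (π y⁻¹ η) ζ • π y⁻¹ η ∂μ :=
  ContinuousLinearMap.integral_apply (integrable_rankOne_orbit μ η hπ) ζ

theorem orbitFrameOperator_map_apply [IsFiniteMeasure μ] [FiniteDimensional ℂ H]
    [MeasurableMul G] [μ.IsMulRightInvariant] (hπ : ∀ ξ : H, Continuous fun g => π g ξ)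
    (g : G) (ζ : H) :
    orbitFrameOperator π μ η (π g ζ) = π g (orbitFrameOperator π μ η ζ) := by
  -- substitute `y ↦ y * g⁻¹`, which turns `π y⁻¹` into `π g ∘ π y⁻¹`
  rw [orbitFrameOperator_apply μ η hπ, orbitFrameOperator_apply μ η hπ,
    ← integral_mul_right_eq_self (fun y => inner ℂ (π y⁻¹ η) (π g ζ) • π y⁻¹ η) g⁻¹]
  simp only [mul_inv_rev, inv_inv, map_mul_apply, LinearIsometryEquiv.inner_map_map, ← map_smul]
  exact (π g).toLinearIsometry.integral_comp_comm (μ := μ) _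

theorem inner_orbitFrameOperator_self [IsFiniteMeasure μ] [FiniteDimensional ℂ H]
    (hπ : ∀ ξ : H, Continuous fun g => π g ξ) (ξ : H) :
    inner ℂ ξ (orbitFrameOperator π μ η ξ) = ((∫ y, ‖inner ℂ η (π y ξ)‖ ^ 2 ∂μ : ℝ) : ℂ) := by
  have hint : Integrable (fun y => inner ℂ (π y⁻¹ η) ξ • π y⁻¹ η) μ :=
    (integrable_rankOne_orbit μ η hπ).apply_continuousLinearMap ξ
  rw [orbitFrameOperator_apply μ η hπ, ← integral_inner hint, ← integral_complex_ofReal]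
  congr 1 with y
  rw [inner_smul_right, ← inner_conj_symm ξ, RCLike.mul_conj, inner_map_inv_left]
  norm_cast

theorem integral_norm_inner_map_sq [FiniteDimensional ℂ H] [Nontrivial H] [MeasurableMul G]
    [IsProbabilityMeasure μ] [μ.IsMulRightInvariant] (hπ : ∀ ξ : H, Continuous fun g => π g ξ)
    (hirr : ∀ M : Submodule ℂ H, (∀ g, ∀ m ∈ M, π g m ∈ M) → M = ⊥ ∨ M = ⊤) (ξ : H) :
    ∫ y, ‖inner ℂ η (π y ξ)‖ ^ 2 ∂μ = ‖ξ‖ ^ 2 * ‖η‖ ^ 2 / Module.finrank ℂ H := by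
  obtain ⟨c, hc⟩ := Module.End.exists_eq_smul_one_of_forall_commute
    (ρ := fun g => (π g).toLinearMap) hirr (A := (orbitFrameOperator π μ η : H →ₗ[ℂ] H))
    fun g => LinearMap.ext fun ζ => orbitFrameOperator_map_apply μ η hπ g ζ
  have hq : ∀ ζ, ∫ y, ‖inner ℂ η (π y ζ)‖ ^ 2 ∂μ = c.re * ‖ζ‖ ^ 2 := fun ζ => by
    have := congrArg Complex.re (inner_orbitFrameOperator_self μ η hπ ζ)
    rw [← ContinuousLinearMap.coe_coe, hc] at this
    simpa [inner_smul_right, ← Complex.ofReal_pow] using this.symm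
  have htrace : Module.finrank ℂ H * c.re = ‖η‖ ^ 2 := by
    let b := stdOrthonormalBasis ℂ H
    rw [← sum_integral_norm_inner_map_sq μ η hπ b]
    simp [hq, b.orthonormal.1]
  have hpos : (0 : ℝ) < Module.finrank ℂ H := by exact_mod_cast Module.finrank_pos
  rw [hq, ← htrace]
  field_simp

end OrbitFrameOperator

theorem stmt12_general {G : Type*} [Group G] [TopologicalSpace G] [IsTopologicalGroup G]
    [CompactSpace G] [MeasurableSpace G] [BorelSpace G]
    (μ : Measure G) [μ.IsHaarMeasure] [IsProbabilityMeasure μ]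
    {H : Type*} [NormedAddCommGroup H] [InnerProductSpace ℂ H]
    [FiniteDimensional ℂ H] [Nontrivial H]
    (π : G →* (H ≃ₗᵢ[ℂ] H)) (hπ : ∀ ξ : H, Continuous fun g => π g ξ)
    (hirr : ∀ M : Submodule ℂ H, IsClosed (M : Set H) →
      (∀ g : G, ∀ m ∈ M, π g m ∈ M) → M = ⊥ ∨ M = ⊤)
    (d : ℕ) (hd : Module.finrank ℂ H = d)
    (η : H) (hη : η ≠ 0)
    (U : H → C(G, ℂ)) (hU : ∀ (ξ : H) (y : G), U ξ y = (inner ℂ η (π y ξ) : ℂ)) :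
    (∀ (c : ℂ) (ξ ζ : H), U (c • ξ + ζ) = c • U ξ + U ζ) ∧
    Function.Injective U ∧
    (∀ (x : G) (ξ : H) (y : G), U (π x ξ) y = U ξ (y * x)) ∧
    ∀ ξ : H, ∫ y, ‖U ξ y‖ ^ 2 ∂μ = ‖ξ‖ ^ 2 * ‖η‖ ^ 2 / d := by
  have hirr' (M : Submodule ℂ H) : (∀ g, ∀ m ∈ M, π g m ∈ M) → M = ⊥ ∨ M = ⊤ :=
    hirr M M.closed_of_finiteDimensional
  have := μ.isMulRightInvariant_of_isProbabilityMeasure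
  refine ⟨fun c ξ ζ => ?_, fun ξ ζ hξζ => ?_, fun x ξ y => ?_, fun ξ => ?_⟩
  · ext y
    simp [hU]
  · refine sub_eq_zero.mp (eq_zero_of_forall_inner_map_eq_zero hirr' hη fun y => ?_)
    rw [map_sub, inner_sub_right, ← hU, ← hU, hξζ, sub_self]
  · rw [hU, hU, map_mul_apply]
  · simp only [hU]
    rw [integral_norm_inner_map_sq μ η hπ hirr' ξ, hd]

/-- For an irreducible continuous unitary representation `π` of a compact
Hausdorff group on a `d`-dimensional complex Hilbert space `H` and a nonzero
`η ∈ H`, the map `U : H → C(G;ℂ)`, `(Uξ)(y) = ⟨π(y)ξ, η⟩ = inner η (π y ξ)`, is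
linear and injective, intertwines `π` with right translation
(`U(π(x)ξ)(y) = (Uξ)(yx)`), and satisfies
`∫ |(Uξ)(y)|² dμ(y) = ‖ξ‖²‖η‖²/d`; hence a suitable multiple of `U` is an
isometry into `L²(G,μ)` intertwining `π` with the right regular
representation. -/
theorem stmt12 {G : Type*} [Group G] [TopologicalSpace G] [IsTopologicalGroup G]
    [CompactSpace G] [T2Space G] [MeasurableSpace G] [BorelSpace G]
    (μ : Measure G) [μ.IsHaarMeasure] [IsProbabilityMeasure μ]
    {H : Type*} [NormedAddCommGroup H] [InnerProductSpace ℂ H]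
    [FiniteDimensional ℂ H] [Nontrivial H]
    (π : G →* (H ≃ₗᵢ[ℂ] H)) (hπ : ∀ ξ : H, Continuous fun g => π g ξ)
    (hirr : ∀ M : Submodule ℂ H, IsClosed (M : Set H) →
      (∀ g : G, ∀ m ∈ M, π g m ∈ M) → M = ⊥ ∨ M = ⊤)
    (d : ℕ) (hd : Module.finrank ℂ H = d)
    (η : H) (hη : η ≠ 0)
    (U : H → C(G, ℂ)) (hU : ∀ (ξ : H) (y : G), U ξ y = (inner ℂ η (π y ξ) : ℂ)) :
    (∀ (c : ℂ) (ξ ζ : H), U (c • ξ + ζ) = c • U ξ + U ζ) ∧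
    Function.Injective U ∧
    (∀ (x : G) (ξ : H) (y : G), U (π x ξ) y = U ξ (y * x)) ∧
    ∀ ξ : H, ∫ y, ‖U ξ y‖ ^ 2 ∂μ = ‖ξ‖ ^ 2 * ‖η‖ ^ 2 / d :=
  stmt12_general μ π hπ hirr d hd η hη U hU
end

section
/- Let G be a compact Hausdorff topological group with normalized Haar measure μ and let ψ ∈ C(G;ℂ). For f ∈ L²(G,μ) define (ψ * f)(x) = ∫ ψ(xy⁻¹) f(y) dμ(y). Then ψ * f is a continuous function on G with sup-norm bound ‖ψ * f‖_∞ ≤ ‖ψ‖_∞ · ‖f‖_{L²}, and the operator T_ψ : L²(G,μ) → L²(G,μ), f ↦ ψ * f, is a compact bounded linear operator. -/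
/-!
Writing `∫ ψ(xy⁻¹) f(y) dμ(y) = ⟪conj ψ(x ·⁻¹), f⟫_{L²}` exhibits the convolution as `x ↦ Λ x f`
for a continuous family `Λ : G → (L² →L ℂ)` with `‖Λ x‖ ≤ ‖ψ‖_∞` (as `μ` is a probability
measure). On the unit ball of `L²` the functions `x ↦ Λ x f` are therefore uniformly bounded and
equicontinuous, since `|Λ x f - Λ x' f| ≤ ‖Λ x - Λ x'‖`, so Arzelà–Ascoli makes `f ↦ Λ · f`
a compact operator into `C(G)`; composing with the continuous inclusion `C(G) → L²` gives `T_ψ`.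
-/
open MeasureTheory
open scoped BoundedContinuousFunction

section PointwiseApplication

variable {𝕜 X E F : Type*} [NontriviallyNormedField 𝕜] [TopologicalSpace X] [CompactSpace X]
  [NormedAddCommGroup E] [NormedSpace 𝕜 E] [NormedAddCommGroup F] [NormedSpace 𝕜 F]

namespace ContinuousMap

noncomputable def flipCLM (Λ : C(X, E →L[𝕜] F)) : E →L[𝕜] X →ᵇ F :=
  LinearMap.mkContinuous
    { toFun := fun f => BoundedContinuousFunction.mkOfCompact ⟨fun x => Λ x f, by fun_prop⟩
      map_add' := fun f g => by ext x; simp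
      map_smul' := fun c f => by ext x; simp }
    ‖Λ‖ fun f => (BoundedContinuousFunction.norm_le (by positivity)).2 fun x =>
      (Λ x).le_opNorm f |>.trans <| by gcongr; exact Λ.norm_coe_le_norm x

@[simp]
lemma flipCLM_apply (Λ : C(X, E →L[𝕜] F)) (f : E) (x : X) : Λ.flipCLM f x = Λ x f := rfl

lemma dist_flipCLM_apply_le (Λ : C(X, E →L[𝕜] F)) (f : E) (x y : X) :
    dist (Λ.flipCLM f x) (Λ.flipCLM f y) ≤ dist (Λ x) (Λ y) * ‖f‖ := by
  rw [flipCLM_apply, flipCLM_apply, dist_eq_norm, dist_eq_norm]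
  exact (Λ x - Λ y).le_opNorm f

theorem isCompactOperator_flipCLM [ProperSpace F] (Λ : C(X, E →L[𝕜] F)) :
    IsCompactOperator Λ.flipCLM := by
  refine (isCompactOperator_iff_isCompact_closure_image_closedBall
    (Λ.flipCLM : E →ₗ[𝕜] X →ᵇ F) one_pos).2 <| BoundedContinuousFunction.arzela_ascoli
    (Metric.closedBall (0 : F) ‖Λ‖) (isCompact_closedBall 0 ‖Λ‖) _ ?_ fun x => ?_
  · rintro _ x ⟨f, hf, rfl⟩
    rw [mem_closedBall_zero_iff] at hf ⊢
    calc ‖Λ.flipCLM f x‖ ≤ ‖Λ x‖ * ‖f‖ := (Λ x).le_opNorm f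
      _ ≤ ‖Λ‖ * 1 := by gcongr; exact Λ.norm_coe_le_norm x
      _ = ‖Λ‖ := mul_one _
  · rw [Metric.equicontinuousAt_iff_right]
    intro ε hε
    filter_upwards [Λ.continuous.tendsto x (Metric.ball_mem_nhds _ hε)] with y hy
    rintro ⟨_, f, hf, rfl⟩
    rw [mem_closedBall_zero_iff] at hf
    calc dist (Λ.flipCLM f x) (Λ.flipCLM f y) ≤ dist (Λ x) (Λ y) * ‖f‖ :=
          dist_flipCLM_apply_le Λ f x y
      _ ≤ dist (Λ x) (Λ y) * 1 := by gcongr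
      _ < ε := by rw [mul_one, dist_comm]; exact hy

end ContinuousMap

end PointwiseApplication

section IntegralKernel

variable {X Y : Type*} [TopologicalSpace X] [TopologicalSpace Y] [CompactSpace Y]
  [MeasurableSpace Y] [BorelSpace Y] (μ : Measure Y) [IsFiniteMeasure μ]

namespace ContinuousMap

/-- Integration against `k x`, written as the `L²` inner product with `conj (k x)` so that
continuity in `x` is inherited from `k`. -/
noncomputable def integralAgainst (k : C(X, C(Y, ℂ))) : C(X, Lp ℂ 2 μ →L[ℂ] ℂ) :=
  ⟨fun x => innerSL ℂ (toLp 2 μ ℂ (star (k x))), by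
    have := (innerSL ℂ (E := Lp ℂ 2 μ)).continuous
    fun_prop⟩

lemma integralAgainst_apply (k : C(X, C(Y, ℂ))) (x : X) (f : Lp ℂ 2 μ) :
    k.integralAgainst μ x f = ∫ y, k x y * f y ∂μ := by
  change innerSL ℂ _ f = _
  rw [innerSL_apply_apply, L2.inner_def]
  refine integral_congr_ae ?_
  filter_upwards [coeFn_toLp (p := 2) μ (𝕜 := ℂ) (star (k x))] with y hy
  rw [hy, RCLike.inner_apply, star_apply, RCLike.star_def, RCLike.conj_conj, mul_comm]

lemma norm_integralAgainst_apply_le [IsProbabilityMeasure μ] (k : C(X, C(Y, ℂ))) (x : X) :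
    ‖k.integralAgainst μ x‖ ≤ ‖k x‖ := by
  change ‖innerSL ℂ _‖ ≤ _
  rw [innerSL_apply_norm]
  have htoLp : ‖(toLp 2 μ ℂ : C(Y, ℂ) →L[ℂ] Lp ℂ 2 μ)‖ ≤ 1 := by
    simpa [measureUnivNNReal] using toLp_norm_le (E := ℂ) (p := 2) μ (𝕜 := ℂ)
  calc ‖toLp 2 μ ℂ (star (k x))‖ ≤ ‖(toLp 2 μ ℂ : C(Y, ℂ) →L[ℂ] Lp ℂ 2 μ)‖ * ‖star (k x)‖ :=
        (toLp 2 μ ℂ).le_opNorm (star (k x))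
    _ ≤ 1 * ‖k x‖ := by rw [norm_star]; gcongr
    _ = ‖k x‖ := one_mul _

end ContinuousMap

end IntegralKernel

section Convolution

variable {G : Type*} [Group G] [TopologicalSpace G] [IsTopologicalGroup G]

noncomputable def convolutionKernel (ψ : C(G, ℂ)) : C(G, C(G, ℂ)) :=
  (ψ.comp ⟨fun p : G × G => p.1 * p.2⁻¹, by fun_prop⟩).curry

@[simp]
lemma convolutionKernel_apply (ψ : C(G, ℂ)) (x y : G) :
    convolutionKernel ψ x y = ψ (x * y⁻¹) := rfl

lemma norm_convolutionKernel_apply_le [CompactSpace G] (ψ : C(G, ℂ)) (x : G) :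
    ‖convolutionKernel ψ x‖ ≤ ‖ψ‖ :=
  (ContinuousMap.norm_le _ (norm_nonneg ψ)).2 fun y => ψ.norm_coe_le_norm (x * y⁻¹)

end Convolution

theorem stmt15_general {G : Type*} [Group G] [TopologicalSpace G] [IsTopologicalGroup G]
    [CompactSpace G] [MeasurableSpace G] [BorelSpace G]
    (μ : Measure G) [IsProbabilityMeasure μ]
    (ψ : C(G, ℂ)) :
    (∀ f : Lp ℂ 2 μ,
      Continuous (fun x => ∫ y, ψ (x * y⁻¹) * f y ∂μ) ∧
      ∀ x : G, ‖∫ y, ψ (x * y⁻¹) * f y ∂μ‖ ≤ ‖ψ‖ * ‖f‖) ∧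
    ∃ T : Lp ℂ 2 μ →L[ℂ] Lp ℂ 2 μ,
      (∀ f : Lp ℂ 2 μ, (T f : G → ℂ) =ᵐ[μ] fun x => ∫ y, ψ (x * y⁻¹) * f y ∂μ) ∧
      IsCompactOperator (⇑T) := by
  set Λ := (convolutionKernel ψ).integralAgainst μ
  have hΛ (f : Lp ℂ 2 μ) (x : G) : Λ x f = ∫ y, ψ (x * y⁻¹) * f y ∂μ := by
    simp only [Λ, ContinuousMap.integralAgainst_apply, convolutionKernel_apply]
  refine ⟨fun f => ⟨?_, fun x => ?_⟩, (BoundedContinuousFunction.toLp 2 μ ℂ).comp Λ.flipCLM,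
    fun f => ?_, ?_⟩
  · exact (Λ.flipCLM f).continuous.congr (hΛ f)
  · calc ‖∫ y, ψ (x * y⁻¹) * f y ∂μ‖ = ‖Λ x f‖ := by rw [hΛ]
      _ ≤ ‖Λ x‖ * ‖f‖ := (Λ x).le_opNorm f
      _ ≤ ‖ψ‖ * ‖f‖ := by
          gcongr
          exact (ContinuousMap.norm_integralAgainst_apply_le μ _ x).trans
            (norm_convolutionKernel_apply_le ψ x)
  · filter_upwards [BoundedContinuousFunction.coeFn_toLp (p := 2) μ (𝕜 := ℂ) (Λ.flipCLM f)]
      with x hx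
    rw [ContinuousLinearMap.comp_apply, hx, ContinuousMap.flipCLM_apply, hΛ]
  · exact (ContinuousMap.isCompactOperator_flipCLM Λ).continuous_comp
      (BoundedContinuousFunction.toLp 2 μ ℂ).continuous

/-- For a compact Hausdorff group `G` with normalized Haar measure `μ` and
`ψ ∈ C(G;ℂ)`, the convolution `(ψ * f)(x) = ∫ ψ(xy⁻¹) f(y) dμ(y)` of `ψ` with
`f ∈ L²(G,μ)` is continuous, bounded by `‖ψ‖_∞ ‖f‖_{L²}`, and the resulting
convolution operator `T_ψ` on `L²(G,μ)` is a compact bounded linear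
operator. -/
theorem stmt15 {G : Type*} [Group G] [TopologicalSpace G] [IsTopologicalGroup G]
    [CompactSpace G] [T2Space G] [MeasurableSpace G] [BorelSpace G]
    (μ : Measure G) [μ.IsHaarMeasure] [IsProbabilityMeasure μ]
    (ψ : C(G, ℂ)) :
    (∀ f : Lp ℂ 2 μ,
      Continuous (fun x => ∫ y, ψ (x * y⁻¹) * f y ∂μ) ∧
      ∀ x : G, ‖∫ y, ψ (x * y⁻¹) * f y ∂μ‖ ≤ ‖ψ‖ * ‖f‖) ∧
    ∃ T : Lp ℂ 2 μ →L[ℂ] Lp ℂ 2 μ,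
      (∀ f : Lp ℂ 2 μ, (T f : G → ℂ) =ᵐ[μ] fun x => ∫ y, ψ (x * y⁻¹) * f y ∂μ) ∧
      IsCompactOperator (⇑T) :=
  stmt15_general μ ψ
end
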